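/- arXiv:1111.0279 — 3 statements merged into one kernel-verified Lean document; each statement's English description precedes it below -/
import Mathlib

section
/- Let S be a polynomial ring, I a monomial ideal, F• a minimal ℕⁿ-graded free resolution of S/I, and Z a subset of the variables with T = S/(Z). Then the pruned complex P(F•, Z) is a free resolution of (S/I) ⊗_S T as a T-module, and it is minimal (all entries of its differentials lie in the maximal homogeneous ideal). -/
/-!
STATEMENT 3: Let `S = K[x_1, …, x_n]`, `I` a monomial ideal, `F•` a minimal
ℕⁿ-(multi)graded free resolution of `S/I`, `Z` a subset of the variables and
`T = S/(Z)`.  Then the pruned complex `P(F•, Z)` is a minimal free resolution of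
`(S/I) ⊗_S T ≅ T/IT` as a `T`-module.

The resolution is encoded by its matrices: `d0 : S^{m 0} → S` (row of minimal
generators of `I`) and `A i : S^{m (i+1)} → S^{m i}`, multigraded via basis
multidegrees `degm`.  Pruning maps all entries to `T` (setting the variables of `Z`
to zero) and keeps (`kp`) exactly the basis elements whose column in the previous
(pruned) matrix is not identically zero.  The conclusions state that the pruned
complex is again a resolution — its image generates `IT`, it is exact at every
step (against vectors supported on the kept basis elements) — and is minimal.
-/

open MvPolynomial

noncomputable section

variable {K : Type*} [Field K] {N : ℕ}

/-- `T = S/(Z)`. -/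
abbrev Tq (K : Type*) [Field K] (N : ℕ) (Z : Set (Fin N)) :=
  MvPolynomial (Fin N) K ⧸ Ideal.span (MvPolynomial.X '' Z : Set (MvPolynomial (Fin N) K))

variable (Z : Set (Fin N)) (m : ℕ → ℕ)

/-- the specialized generator row. -/
def B0 (d0 : Fin (m 0) → MvPolynomial (Fin N) K) : Fin (m 0) → Tq K N Z :=
  fun c => Ideal.Quotient.mk _ (d0 c)

/-- the specialized syzygy matrices. -/
def Bmat (A : (i : ℕ) → Matrix (Fin (m i)) (Fin (m (i + 1))) (MvPolynomial (Fin N) K))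
    (i : ℕ) : Matrix (Fin (m i)) (Fin (m (i + 1))) (Tq K N Z) :=
  (A i).map (Ideal.Quotient.mk _)

/-- the kept basis elements after pruning. -/
def kp (d0 : Fin (m 0) → MvPolynomial (Fin N) K)
    (A : (i : ℕ) → Matrix (Fin (m i)) (Fin (m (i + 1))) (MvPolynomial (Fin N) K)) :
    (i : ℕ) → Set (Fin (m i))
  | 0 => {c | B0 Z m d0 c ≠ 0}
  | (i + 1) => {c | ∃ r ∈ kp d0 A i, Bmat Z m A i r c ≠ 0}

open Classical in
/-- The algebra map setting the variables of `Z` to zero. -/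
def sigA (Z : Set (Fin N)) : MvPolynomial (Fin N) K →ₐ[K] MvPolynomial (Fin N) K :=
  aeval (fun j => if j ∈ Z then 0 else X j)

lemma sig_monomial (Z : Set (Fin N)) (p : Fin N →₀ ℕ) (c : K)
    (h : ∀ j ∈ Z, p j = 0) : sigA Z (monomial p c) = monomial p c := by
  classical
  rw [sigA, aeval_monomial, monomial_eq]
  congr 1
  refine Finsupp.prod_congr (fun j hj => ?_)
  have : j ∉ Z := fun hz => (Finsupp.mem_support_iff.mp hj) (h j hz)
  simp [this]

lemma sig_mem_zero (Z : Set (Fin N)) :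
    ∀ f ∈ Ideal.span (MvPolynomial.X '' Z : Set (MvPolynomial (Fin N) K)), sigA Z f = 0 := by
  classical
  intro f hf
  have : Ideal.span (MvPolynomial.X '' Z : Set (MvPolynomial (Fin N) K))
      ≤ RingHom.ker (sigA Z).toRingHom := by
    rw [Ideal.span_le]
    rintro _ ⟨j, hj, rfl⟩
    simp [RingHom.mem_ker, sigA, hj]
  exact this hf

lemma monomial_mem_zero (Z : Set (Fin N)) (p : Fin N →₀ ℕ) (c : K) (j : Fin N)
    (hj : j ∈ Z) (h : p j ≠ 0) :
    monomial p c ∈ Ideal.span (MvPolynomial.X '' Z : Set (MvPolynomial (Fin N) K)) := by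
  have hx : (X j : MvPolynomial (Fin N) K)
      ∈ Ideal.span (MvPolynomial.X '' Z : Set (MvPolynomial (Fin N) K)) :=
    Ideal.subset_span ⟨j, hj, rfl⟩
  have hle : Finsupp.single j 1 ≤ p := Finsupp.single_le_iff.mpr (Nat.one_le_iff_ne_zero.mpr h)
  have : monomial p c = monomial (p - Finsupp.single j 1) c * X j := by
    have hX : (X j : MvPolynomial (Fin N) K) = monomial (Finsupp.single j 1) 1 := rfl
    rw [hX, monomial_mul, mul_one, tsub_add_cancel_of_le hle]
  rw [this]
  exact Ideal.mul_mem_left _ _ hx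

lemma eq_monomial_of_support {f : MvPolynomial (Fin N) K} {p : Fin N →₀ ℕ}
    (h : ∀ q ∈ f.support, q = p) : f = monomial p (coeff p f) := by
  ext q
  rw [coeff_monomial]
  by_cases hq : q = p
  · subst hq; simp
  · have : q ∉ f.support := fun hs => hq (h q hs)
    simp [MvPolynomial.notMem_support_iff.mp this, Ne.symm hq]

lemma pi_sig (Z : Set (Fin N)) (f : MvPolynomial (Fin N) K) :
    Ideal.Quotient.mk (Ideal.span (MvPolynomial.X '' Z)) (sigA Z f)
      = Ideal.Quotient.mk (Ideal.span (MvPolynomial.X '' Z)) f := by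
  classical
  have : (Ideal.Quotient.mk (Ideal.span (MvPolynomial.X '' Z))).comp (sigA Z).toRingHom
      = Ideal.Quotient.mk (Ideal.span (MvPolynomial.X '' Z) :
          Ideal (MvPolynomial (Fin N) K)) := by
    apply MvPolynomial.ringHom_ext
    · intro a
      simp [sigA]
    · intro j
      by_cases hj : j ∈ Z
      · have hx : Ideal.Quotient.mk (Ideal.span (MvPolynomial.X '' Z))
            (X j : MvPolynomial (Fin N) K) = 0 :=
          Ideal.Quotient.eq_zero_iff_mem.mpr (Ideal.subset_span ⟨j, hj, rfl⟩)
        simp [sigA, hj, hx]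
      · simp [sigA, hj]
  exact RingHom.congr_fun this f

lemma not_unit_of_cc (Z : Set (Fin N)) (f : MvPolynomial (Fin N) K)
    (h : constantCoeff f = 0) :
    ¬ IsUnit (Ideal.Quotient.mk (Ideal.span (MvPolynomial.X '' Z)) f) := by
  intro hu
  obtain ⟨b, hb⟩ := isUnit_iff_exists_inv.mp hu
  obtain ⟨g, hg⟩ := Ideal.Quotient.mk_surjective b
  have h1 : Ideal.Quotient.mk (Ideal.span (MvPolynomial.X '' Z)) (f * g) = 1 := by
    rw [map_mul, hg, hb]
  have hmem : f * g - 1 ∈ Ideal.span (MvPolynomial.X '' Z : Set (MvPolynomial (Fin N) K)) := by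
    rw [← Ideal.Quotient.eq_zero_iff_mem, map_sub, h1, map_one, sub_self]
  have hker : Ideal.span (MvPolynomial.X '' Z : Set (MvPolynomial (Fin N) K))
      ≤ RingHom.ker (constantCoeff (R := K) (σ := Fin N)) := by
    rw [Ideal.span_le]
    rintro _ ⟨j, hj, rfl⟩
    simp [RingHom.mem_ker]
  have := hker hmem
  rw [RingHom.mem_ker, map_sub, map_mul, h, map_one, zero_mul, zero_sub] at this
  exact one_ne_zero (neg_eq_zero.mp this)


/-- the multidegree `p` avoids `Z`. -/
def goodDeg (Z : Set (Fin N)) (p : Fin N →₀ ℕ) : Prop := ∀ j ∈ Z, p j = 0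

set_option maxHeartbeats 1000000
set_option synthInstance.maxHeartbeats 400000

open Classical in
theorem pruned_resolution_of_monomial_ideal
    (I : Ideal (MvPolynomial (Fin N) K))
    -- `I` is a monomial ideal:
    (hmono : ∃ G : Set (Fin N →₀ ℕ), I = Ideal.span ((fun a => monomial a (1 : K)) '' G))
    (d0 : Fin (m 0) → MvPolynomial (Fin N) K)
    (A : (i : ℕ) → Matrix (Fin (m i)) (Fin (m (i + 1))) (MvPolynomial (Fin N) K))
    (degm : (i : ℕ) → Fin (m i) → (Fin N →₀ ℕ))
    -- `F•` resolves `S/I`: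
    (hgen : Ideal.span (Set.range d0) = I)
    (hcomplex0 : ∀ c, ∑ j, d0 j * A 0 j c = 0)
    (hcomplex : ∀ i, A i * A (i + 1) = 0)
    (hexact0 : ∀ v : Fin (m 0) → MvPolynomial (Fin N) K,
      ∑ j, d0 j * v j = 0 → ∃ w, v = (A 0).mulVec w)
    (hexact : ∀ i v, (A i).mulVec v = 0 → ∃ w, v = (A (i + 1)).mulVec w)
    -- `F•` is minimal:
    (hmin0 : ∀ c, constantCoeff (d0 c) = 0)
    (hmin : ∀ i r c, constantCoeff (A i r c) = 0)
    -- `F•` is ℕⁿ-multigraded with basis multidegrees `degm`: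
    (hdeg0 : ∀ c, ∀ p ∈ (d0 c).support, p = degm 0 c)
    (hdeg : ∀ i r c, ∀ p ∈ (A i r c).support, p + degm i r = degm (i + 1) c) :
    -- (1) the surviving generators generate `I·T`, so `H₀` of the pruned complex
    --     is `(S/I) ⊗ T = T/IT`:
    (Ideal.span (B0 Z m d0 '' kp Z m d0 A 0)
        = I.map (Ideal.Quotient.mk (Ideal.span (MvPolynomial.X '' Z)))) ∧
    -- (2) exactness of the pruned complex at homological degree 1:
    (∀ v : Fin (m 0) → Tq K N Z, (∀ c ∉ kp Z m d0 A 0, v c = 0) →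
      (∑ c ∈ Finset.univ.filter (· ∈ kp Z m d0 A 0), B0 Z m d0 c * v c) = 0 →
      ∃ w : Fin (m 1) → Tq K N Z, (∀ c ∉ kp Z m d0 A 1, w c = 0) ∧
        ∀ r ∈ kp Z m d0 A 0,
          v r = ∑ c ∈ Finset.univ.filter (· ∈ kp Z m d0 A 1), Bmat Z m A 0 r c * w c) ∧
    -- (3) exactness of the pruned complex at all higher homological degrees:
    (∀ (i : ℕ) (v : Fin (m (i + 1)) → Tq K N Z), (∀ c ∉ kp Z m d0 A (i + 1), v c = 0) →
      (∀ r ∈ kp Z m d0 A i,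
        ∑ c ∈ Finset.univ.filter (· ∈ kp Z m d0 A (i + 1)), Bmat Z m A i r c * v c = 0) →
      ∃ w : Fin (m (i + 2)) → Tq K N Z, (∀ c ∉ kp Z m d0 A (i + 2), w c = 0) ∧
        ∀ r ∈ kp Z m d0 A (i + 1),
          v r = ∑ c ∈ Finset.univ.filter (· ∈ kp Z m d0 A (i + 2)),
            Bmat Z m A (i + 1) r c * w c) ∧
    -- (4) the pruned complex is minimal:
    ((∀ c ∈ kp Z m d0 A 0, ¬ IsUnit (B0 Z m d0 c)) ∧
      ∀ i r c, r ∈ kp Z m d0 A i → c ∈ kp Z m d0 A (i + 1) →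
        ¬ IsUnit (Bmat Z m A i r c)) := by
  classical
  set Zi : Ideal (MvPolynomial (Fin N) K) := Ideal.span (MvPolynomial.X '' Z) with hZi
  let π : MvPolynomial (Fin N) K →+* Tq K N Z := Ideal.Quotient.mk Zi
  let σb : Tq K N Z →+* MvPolynomial (Fin N) K :=
    Ideal.Quotient.lift Zi (sigA Z).toRingHom (sig_mem_zero Z)
  have hσb_mk : ∀ f, σb (π f) = sigA Z f := fun f => Ideal.Quotient.lift_mk Zi _ _
  have hsec : ∀ t : Tq K N Z, π (σb t) = t := by
    intro t
    obtain ⟨f, rfl⟩ := Ideal.Quotient.mk_surjective t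
    rw [hσb_mk]
    exact pi_sig Z f
  -- `good i c` : the multidegree of the basis element `c` avoids `Z`.
  let good : (i : ℕ) → Fin (m i) → Prop := fun i c => goodDeg Z (degm i c)
  have hngood : ∀ i c, ¬ good i c → ∃ j ∈ Z, degm i c j ≠ 0 := by
    intro i c h
    have h' : ¬ ∀ j ∈ Z, degm i c j = 0 := h
    push_neg at h'
    exact h'
  have hgood_def : ∀ i c, good i c ↔ ∀ j ∈ Z, degm i c j = 0 := fun i c => Iff.rfl
  -- entries are (scalar multiples of) single monomials
  have hA_mono : ∀ i r c,
      A i r c = monomial (degm (i+1) c - degm i r) (coeff (degm (i+1) c - degm i r) (A i r c)) := by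
    intro i r c
    refine eq_monomial_of_support (fun q hq => ?_)
    have := hdeg i r c q hq
    exact eq_tsub_of_add_eq this
  have hd0_mono : ∀ c, d0 c = monomial (degm 0 c) (coeff (degm 0 c) (d0 c)) :=
    fun c => eq_monomial_of_support (fun q hq => hdeg0 c q hq)
  -- bad row, good column ⇒ entry is zero over S
  have hAzero_badrow : ∀ i r c, ¬ good i r → good (i+1) c → A i r c = 0 := by
    intro i r c hr hc
    rcases Finset.eq_empty_or_nonempty (A i r c).support with hs | ⟨q, hq⟩
    · exact MvPolynomial.support_eq_empty.mp hs
    · exfalso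
      obtain ⟨j, hjZ, hj⟩ := hngood i r hr
      have hsum := hdeg i r c q hq
      have : q j + degm i r j = degm (i+1) c j := by
        rw [← Finsupp.add_apply, hsum]
      rw [hc j hjZ] at this
      omega
  -- good row, bad column ⇒ entry maps to zero in T
  have hBzero_badcol : ∀ i r c, good i r → ¬ good (i+1) c → π (A i r c) = 0 := by
    intro i r c hr hc
    obtain ⟨j, hjZ, hj⟩ := hngood (i+1) c hc
    rw [hA_mono i r c]
    refine Ideal.Quotient.eq_zero_iff_mem.mpr (monomial_mem_zero Z _ _ j hjZ ?_)
    rw [Finsupp.tsub_apply, hr j hjZ]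
    omega
  have hB0zero : ∀ c, ¬ good 0 c → B0 Z m d0 c = 0 := by
    intro c hc
    obtain ⟨j, hjZ, hj⟩ := hngood 0 c hc
    show π (d0 c) = 0
    rw [hd0_mono c]
    exact Ideal.Quotient.eq_zero_iff_mem.mpr (monomial_mem_zero Z _ _ j hjZ hj)
  -- good row, good column ⇒ entry fixed by σ
  have hSigA : ∀ i r c, good i r → good (i+1) c → sigA Z (A i r c) = A i r c := by
    intro i r c hr hc
    conv_lhs => rw [hA_mono i r c]
    rw [sig_monomial Z _ _ (fun j hj => by rw [Finsupp.tsub_apply, hc j hj, hr j hj])]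
    exact (hA_mono i r c).symm
  have hSigd0 : ∀ c, good 0 c → sigA Z (d0 c) = d0 c := by
    intro c hc
    conv_lhs => rw [hd0_mono c]
    rw [sig_monomial Z _ _ (fun j hj => hc j hj)]
    exact (hd0_mono c).symm
  have hAfix : ∀ i r c, good i r → good (i+1) c → π (A i r c) = 0 → A i r c = 0 := by
    intro i r c hr hc h
    have := sig_mem_zero Z _ (Ideal.Quotient.eq_zero_iff_mem.mp h)
    rwa [hSigA i r c hr hc] at this
  -- unit vectors are not boundaries (minimality over S)
  have hnz : ∀ (k : ℕ) (c : Fin (m k)) (w : Fin (m (k+1)) → MvPolynomial (Fin N) K),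
      (fun j => if j = c then (1 : MvPolynomial (Fin N) K) else 0) = (A k).mulVec w → False := by
    intro k c w h
    have h1 : (1 : MvPolynomial (Fin N) K) = ∑ j, A k c j * w j := by
      have := congrFun h c
      simpa [Matrix.mulVec, dotProduct] using this
    have := congrArg constantCoeff h1
    rw [map_one, map_sum] at this
    simp only [map_mul, hmin, zero_mul, Finset.sum_const_zero] at this
    exact one_ne_zero this
  -- nonzero columns
  have hcol0 : ∀ c, good 0 c → B0 Z m d0 c ≠ 0 := by
    intro c hc hB
    have hd0z : d0 c = 0 := by
      have := sig_mem_zero Z _ (Ideal.Quotient.eq_zero_iff_mem.mp hB)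
      rwa [hSigd0 c hc] at this
    have hv : ∑ j, d0 j * (fun j => if j = c then (1 : MvPolynomial (Fin N) K) else 0) j = 0 := by
      simp [mul_ite, Finset.sum_ite_eq', hd0z]
    obtain ⟨w, hw⟩ := hexact0 _ hv
    exact hnz 0 c w hw
  have hcol : ∀ i c, good (i+1) c → ∃ r, good i r ∧ π (A i r c) ≠ 0 := by
    intro i c hc
    by_contra h
    push_neg at h
    have hzero : ∀ r, A i r c = 0 := by
      intro r
      by_cases hr : good i r
      · exact hAfix i r c hr hc (h r hr)
      · exact hAzero_badrow i r c hr hc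
    have hv : (A i).mulVec (fun j => if j = c then (1 : MvPolynomial (Fin N) K) else 0) = 0 := by
      funext r
      show ∑ j, A i r j * (if j = c then (1 : MvPolynomial (Fin N) K) else 0) = 0
      simp [mul_ite, Finset.sum_ite_eq', hzero]
    obtain ⟨w, hw⟩ := hexact i _ hv
    exact hnz (i+1) c w hw
  -- characterization of the kept basis elements
  have hkp : ∀ i c, c ∈ kp Z m d0 A i ↔ good i c := by
    intro i
    induction i with
    | zero =>
        intro c
        constructor
        · intro hc
          by_contra hg
          exact hc (hB0zero c hg)
        · exact fun hg => hcol0 c hg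
    | succ i ih =>
        intro c
        constructor
        · rintro ⟨r, hr, hB⟩
          by_contra hg
          exact hB (hBzero_badcol i r c ((ih r).mp hr) hg)
        · intro hg
          obtain ⟨r, hrg, hrn⟩ := hcol i c hg
          exact ⟨r, (ih r).mpr hrg, hrn⟩
  refine ⟨?_, ?_, ?_, ?_, ?_⟩
  · -- (1)
    have h1 : I.map π = Ideal.span (Set.range (B0 Z m d0)) := by
      rw [← hgen, Ideal.map_span, ← Set.range_comp]
      rfl
    rw [h1]
    apply le_antisymm
    · exact Ideal.span_mono (Set.image_subset_range _ _)
    · rw [Ideal.span_le]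
      rintro _ ⟨c, rfl⟩
      by_cases hc : c ∈ kp Z m d0 A 0
      · exact Ideal.subset_span ⟨c, hc, rfl⟩
      · have : B0 Z m d0 c = 0 := not_not.mp hc
        rw [this]
        exact (Ideal.span _).zero_mem
  · -- (2)
    intro v hv0 hcyc
    set u : Fin (m 0) → MvPolynomial (Fin N) K :=
      fun c => if c ∈ kp Z m d0 A 0 then σb (v c) else 0 with hu_def
    have hu : ∑ j, d0 j * u j = 0 := by
      have h0 := congrArg σb hcyc
      rw [map_sum, map_zero] at h0
      rw [← Finset.sum_filter_add_sum_filter_not Finset.univ (· ∈ kp Z m d0 A 0)]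
      have e1 : ∑ j ∈ Finset.univ.filter (· ∈ kp Z m d0 A 0), d0 j * u j = 0 := by
        rw [← h0]
        refine Finset.sum_congr rfl (fun c hc => ?_)
        have hck := (Finset.mem_filter.mp hc).2
        rw [map_mul, hu_def]
        simp only [if_pos hck]
        congr 1
        show d0 c = σb (π (d0 c))
        rw [hσb_mk, hSigd0 c ((hkp 0 c).mp hck)]
      have e2 : ∑ j ∈ Finset.univ.filter (¬ · ∈ kp Z m d0 A 0), d0 j * u j = 0 := by
        refine Finset.sum_eq_zero (fun c hc => ?_)
        have hck := (Finset.mem_filter.mp hc).2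
        rw [hu_def]; simp only [if_neg hck, mul_zero]
      rw [e1, e2, add_zero]
    obtain ⟨w', hw'⟩ := hexact0 u hu
    refine ⟨fun c => if c ∈ kp Z m d0 A 1 then π (w' c) else 0,
      fun c hc => if_neg hc, fun r hr => ?_⟩
    have hrg : good 0 r := (hkp 0 r).mp hr
    have step : v r = ∑ c, Bmat Z m A 0 r c * π (w' c) := by
      calc v r = π (σb (v r)) := (hsec _).symm
        _ = π (u r) := by rw [hu_def]; simp only [if_pos hr]
        _ = π ((A 0).mulVec w' r) := by rw [hw']
        _ = ∑ c, Bmat Z m A 0 r c * π (w' c) := by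
            have hmv : (A 0).mulVec w' r = ∑ c, A 0 r c * w' c := by
              simp [Matrix.mulVec, dotProduct]
            rw [hmv, map_sum]
            exact Finset.sum_congr rfl (fun c _ => by rw [map_mul]; rfl)
    rw [step, ← Finset.sum_filter_add_sum_filter_not Finset.univ (· ∈ kp Z m d0 A 1)]
    have e2 : ∑ c ∈ Finset.univ.filter (¬ · ∈ kp Z m d0 A 1), Bmat Z m A 0 r c * π (w' c) = 0 := by
      refine Finset.sum_eq_zero (fun c hc => ?_)
      have hck := (Finset.mem_filter.mp hc).2
      have : π (A 0 r c) = 0 :=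
        hBzero_badcol 0 r c hrg (fun hg => hck ((hkp 1 c).mpr hg))
      show π (A 0 r c) * π (w' c) = 0
      rw [this, zero_mul]
    rw [e2, add_zero]
    refine Finset.sum_congr rfl (fun c hc => ?_)
    simp only [if_pos (Finset.mem_filter.mp hc).2]
  · -- (3)
    intro i v hv0 hcyc
    set u : Fin (m (i+1)) → MvPolynomial (Fin N) K :=
      fun c => if c ∈ kp Z m d0 A (i+1) then σb (v c) else 0 with hu_def
    have hu : (A i).mulVec u = 0 := by
      funext r
      show ∑ c, A i r c * u c = 0
      by_cases hr : good i r
      · have h0 := congrArg σb (hcyc r ((hkp i r).mpr hr))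
        rw [map_sum, map_zero] at h0
        rw [← Finset.sum_filter_add_sum_filter_not Finset.univ (· ∈ kp Z m d0 A (i+1))]
        have e1 : ∑ c ∈ Finset.univ.filter (· ∈ kp Z m d0 A (i+1)), A i r c * u c = 0 := by
          rw [← h0]
          refine Finset.sum_congr rfl (fun c hc => ?_)
          have hck := (Finset.mem_filter.mp hc).2
          rw [map_mul, hu_def]
          simp only [if_pos hck]
          congr 1
          show A i r c = σb (π (A i r c))
          rw [hσb_mk, hSigA i r c hr ((hkp (i+1) c).mp hck)]
        have e2 : ∑ c ∈ Finset.univ.filter (¬ · ∈ kp Z m d0 A (i+1)), A i r c * u c = 0 := by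
          refine Finset.sum_eq_zero (fun c hc => ?_)
          have hck := (Finset.mem_filter.mp hc).2
          rw [hu_def]; simp only [if_neg hck, mul_zero]
        rw [e1, e2, add_zero]
      · refine Finset.sum_eq_zero (fun c _ => ?_)
        by_cases hck : c ∈ kp Z m d0 A (i+1)
        · rw [hAzero_badrow i r c hr ((hkp (i+1) c).mp hck), zero_mul]
        · rw [hu_def]; simp only [if_neg hck, mul_zero]
    obtain ⟨w', hw'⟩ := hexact i u hu
    refine ⟨fun c => if c ∈ kp Z m d0 A (i+2) then π (w' c) else 0,
      fun c hc => if_neg hc, fun r hr => ?_⟩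
    have hrg : good (i+1) r := (hkp (i+1) r).mp hr
    have step : v r = ∑ c, Bmat Z m A (i+1) r c * π (w' c) := by
      calc v r = π (σb (v r)) := (hsec _).symm
        _ = π (u r) := by rw [hu_def]; simp only [if_pos hr]
        _ = π ((A (i+1)).mulVec w' r) := by rw [hw']
        _ = ∑ c, Bmat Z m A (i+1) r c * π (w' c) := by
            have hmv : (A (i+1)).mulVec w' r = ∑ c, A (i+1) r c * w' c := by
              simp [Matrix.mulVec, dotProduct]
            rw [hmv, map_sum]
            exact Finset.sum_congr rfl (fun c _ => by rw [map_mul]; rfl)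
    rw [step, ← Finset.sum_filter_add_sum_filter_not Finset.univ (· ∈ kp Z m d0 A (i+2))]
    have e2 : ∑ c ∈ Finset.univ.filter (¬ · ∈ kp Z m d0 A (i+2)),
        Bmat Z m A (i+1) r c * π (w' c) = 0 := by
      refine Finset.sum_eq_zero (fun c hc => ?_)
      have hck := (Finset.mem_filter.mp hc).2
      have : π (A (i+1) r c) = 0 :=
        hBzero_badcol (i+1) r c hrg (fun hg => hck ((hkp (i+2) c).mpr hg))
      show π (A (i+1) r c) * π (w' c) = 0
      rw [this, zero_mul]
    rw [e2, add_zero]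
    refine Finset.sum_congr rfl (fun c hc => ?_)
    simp only [if_pos (Finset.mem_filter.mp hc).2]
  · -- (4a)
    exact fun c _ => not_unit_of_cc Z (d0 c) (hmin0 c)
  · -- (4b)
    exact fun i r c _ _ => not_unit_of_cc Z (A i r c) (hmin i r c)

end
end

section
/- Let K be a squarefree monomial ideal in S = K[x_{ij}] such that (a) no minimal generator of K is divisible by a product of two variables from the same column, and (b) K = ∩_α P_α where each P_α is generated by variables from pairwise distinct columns. Fix j and i ≠ 1, and let 'sub' denote the substitution x_{ij} ↦ x_{1j}. Then (K)_sub = ∩_α (P_α)_sub. -/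
/-!
STATEMENT 8: Let `S = K[x_{ij}]` with doubly indexed variables (`ρ` rows, `γ` columns)
and let `Kid` be a squarefree monomial ideal such that
(a) no minimal generator of `Kid` is divisible by a product of two variables from the
    same column — encoded equivalently: whenever `x_{ij} x_{i'j} · m ∈ Kid` with
    `i ≠ i'`, already `x_{ij} · m ∈ Kid` or `x_{i'j} · m ∈ Kid`; and
(b) `Kid = ⋂ P a` where each `P a` is generated by variables from pairwise distinct
    columns.
Fix a row `i ≠ i₁` and a column `j`, and let `sub` be the `K`-algebra substitution
`x_{ij} ↦ x_{i₁ j}` (fixing all other variables).  Then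
`(Kid)_sub = ⋂ (P a)_sub`.
-/

open MvPolynomial

noncomputable section

variable {K : Type*} [Field K] {ρ γ : Type*} [DecidableEq ρ] [DecidableEq γ]

lemma aux_prodX {R σ' τ : Type*} [CommSemiring R] (t : Finset τ) (h : τ → σ') :
    ∏ v ∈ t, (X (h v) : MvPolynomial σ' R)
      = monomial (∑ v ∈ t, Finsupp.single (h v) 1) 1 := by
  classical
  induction t using Finset.induction with
  | empty => simp
  | @insert x t hx ih =>
      rw [Finset.prod_insert hx, Finset.sum_insert hx, ih, X, monomial_mul, one_mul]

lemma aux_sum_single_apply {τ σ' : Type*} [DecidableEq σ'] (t : Finset τ) (h : τ → σ') (w : σ') :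
    (∑ v ∈ t, Finsupp.single (h v) (1 : ℕ)) w
      = (t.filter (fun v => h v = w)).card := by
  classical
  rw [Finset.card_filter, Finsupp.finset_sum_apply]
  exact Finset.sum_congr rfl fun v _ => Finsupp.single_apply

lemma aux_sum_single_apply_id {σ' : Type*} [DecidableEq σ'] (t : Finset σ') (w : σ') :
    (∑ v ∈ t, Finsupp.single v (1 : ℕ)) w = (t.filter (fun v => v = w)).card := by
  simpa using aux_sum_single_apply t id w

/-- the substitution `x_{ij} ↦ x_{i₁ j}`, fixing all other variables. -/
def subst (i₁ i : ρ) (j : γ) :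
    MvPolynomial (ρ × γ) K →ₐ[K] MvPolynomial (ρ × γ) K :=
  aeval (fun p => if p = (i, j) then X (i₁, j) else X p)

theorem substitution_commutes_with_intersection
    {A : Type*} (i₁ i : ρ) (j : γ) (hi : i ≠ i₁)
    (Kid : Ideal (MvPolynomial (ρ × γ) K))
    (P : A → Ideal (MvPolynomial (ρ × γ) K))
    -- `Kid` is a squarefree monomial ideal
    (hmono : ∃ G : Set (Finset (ρ × γ)),
      Kid = Ideal.span ((fun s => ∏ v ∈ s, (X v : MvPolynomial (ρ × γ) K)) '' G))
    -- (a) no minimal generator contains a product of two variables from the same column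
    (hcol : ∀ (m : MvPolynomial (ρ × γ) K) (i' i'' : ρ) (j' : γ), i' ≠ i'' →
      X (i', j') * X (i'', j') * m ∈ Kid →
      X (i', j') * m ∈ Kid ∨ X (i'', j') * m ∈ Kid)
    -- (b) each `P a` is generated by variables from pairwise distinct columns
    (hP : ∀ a, ∃ s : Set (ρ × γ), Set.InjOn Prod.snd s ∧
      P a = Ideal.span ((fun v => (X v : MvPolynomial (ρ × γ) K)) '' s))
    (hdecomp : Kid = ⨅ a, P a) :
    Kid.map (subst (K := K) i₁ i j).toRingHom
      = ⨅ a, (P a).map (subst (K := K) i₁ i j).toRingHom := by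
  classical
  obtain ⟨G, hG⟩ := hmono
  choose s hinj hPs using hP
  set f := (subst (K := K) i₁ i j).toRingHom with hf
  set σf : ρ × γ → ρ × γ := fun v => if v = (i, j) then (i₁, j) else v with hσf
  have hij_ne : ((i, j) : ρ × γ) ≠ (i₁, j) := by simp [hi]
  have hσf_self : σf (i, j) = (i₁, j) := by simp [hσf]
  have hσf_other : ∀ v, v ≠ (i, j) → σf v = v := fun v hv => by simp [hσf, hv]
  have hfX : ∀ v, f (X v) = X (σf v) := by
    intro v
    show (subst (K := K) i₁ i j) (X v) = _
    simp only [subst, aeval_X]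
    by_cases hv : v = (i, j)
    · simp [hσf, hv]
    · simp [hσf, hv]
  have hfprod : ∀ t : Finset (ρ × γ),
      f (∏ v ∈ t, (X v : MvPolynomial (ρ × γ) K))
        = monomial (∑ v ∈ t, Finsupp.single (σf v) 1) 1 := by
    intro t
    rw [map_prod]
    simp_rw [hfX]
    exact aux_prodX t σf
  have hKid_mem : ∀ q : MvPolynomial (ρ × γ) K,
      q ∈ Kid ↔ ∀ μ ∈ q.support, ∃ t ∈ G, (∑ v ∈ t, Finsupp.single v 1) ≤ μ := by
    intro q
    have himg : ((fun s => ∏ v ∈ s, (X v : MvPolynomial (ρ × γ) K)) '' G)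
        = ((fun e => monomial e (1 : K)) ''
            ((fun t : Finset (ρ × γ) => ∑ v ∈ t, Finsupp.single v 1) '' G)) := by
      rw [Set.image_image]
      exact Set.image_congr' (fun t => by simpa using aux_prodX (R := K) t id)
    rw [hG, himg, mem_ideal_span_monomial_image]
    refine forall₂_congr fun μ _ => ?_
    rw [Set.exists_mem_image]
  have hKmap : Kid.map f = Ideal.span ((fun e => monomial e (1 : K)) ''
      ((fun t : Finset (ρ × γ) => ∑ v ∈ t, Finsupp.single (σf v) 1) '' G)) := by
    rw [hG, Ideal.map_span, Set.image_image, Set.image_image]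
    exact congrArg _ (Set.image_congr' hfprod)
  have hPmap : ∀ a (q : MvPolynomial (ρ × γ) K), q ∈ (P a).map f ↔
      ∀ μ ∈ q.support, ∃ w ∈ s a, μ (σf w) ≠ 0 := by
    intro a q
    have himg : ((fun v => f (X v)) '' s a) = X '' (σf '' s a) := by
      rw [Set.image_image]
      exact Set.image_congr' (fun v => hfX v)
    rw [hPs a, Ideal.map_span, Set.image_image, himg, mem_ideal_span_X_image]
    refine forall₂_congr fun μ _ => ?_
    rw [Set.exists_mem_image]
  refine le_antisymm (le_iInf fun a => Ideal.map_mono ?_) ?_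
  · rw [hdecomp]; exact iInf_le _ a
  intro g hg
  rw [hKmap, mem_ideal_span_monomial_image]
  intro μ hμ
  rw [Set.exists_mem_image]
  have H : ∀ a, ∃ w ∈ s a, μ (σf w) ≠ 0 :=
    fun a => (hPmap a g).mp (Ideal.mem_iInf.mp hg a) μ hμ
  set e := μ (i₁, j) with he
  set ν : (ρ × γ) →₀ ℕ := μ.update (i, j) e with hν
  have hνap : ∀ w, ν w = if w = (i, j) then e else μ w := by
    intro w
    rw [hν, Finsupp.coe_update, Function.update_apply]
  have hmemsupp : ∀ τ : (ρ × γ) →₀ ℕ, τ ∈ (monomial τ (1 : K)).support := by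
    intro τ
    rw [support_monomial, if_neg one_ne_zero]
    exact Finset.mem_singleton_self τ
  have hνmem : monomial ν (1 : K) ∈ Kid := by
    rw [hdecomp, Ideal.mem_iInf]
    intro a
    rw [hPs a, mem_ideal_span_X_image]
    intro m hm
    rw [support_monomial, if_neg one_ne_zero, Finset.mem_singleton] at hm
    subst hm
    obtain ⟨w, hws, hwμ⟩ := H a
    refine ⟨w, hws, ?_⟩
    by_cases hw : w = (i, j)
    · subst hw
      rw [hνap, if_pos rfl]
      rw [hσf_self] at hwμ
      exact hwμ
    · rw [hνap, if_neg hw]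
      rw [hσf_other w hw] at hwμ
      exact hwμ
  have final : ∀ t : Finset (ρ × γ),
      (∀ w, w ≠ (i, j) → w ≠ (i₁, j) → (∑ v ∈ t, Finsupp.single v 1) w ≤ μ w) →
      ((∑ v ∈ t, Finsupp.single v 1) (i, j) + (∑ v ∈ t, Finsupp.single v 1) (i₁, j) ≤ e) →
      (∑ v ∈ t, Finsupp.single (σf v) 1) ≤ μ := by
    intro t h1 h2
    rw [Finsupp.le_def]
    intro w
    rw [aux_sum_single_apply]
    by_cases hw1 : w = (i, j)
    · subst hw1
      have hempty : t.filter (fun v => σf v = (i, j)) = ∅ := by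
        rw [Finset.filter_eq_empty_iff]
        intro v _
        by_cases hv : v = (i, j)
        · rw [hv, hσf_self]; exact Ne.symm hij_ne
        · rw [hσf_other v hv]; exact hv
      rw [hempty]
      simp
    · by_cases hw2 : w = (i₁, j)
      · subst hw2
        have hsubset : t.filter (fun v => σf v = (i₁, j)) ⊆
            t.filter (fun v => v = (i, j)) ∪ t.filter (fun v => v = (i₁, j)) := by
          intro v hv
          rw [Finset.mem_filter] at hv
          obtain ⟨hvt, hvσ⟩ := hv
          by_cases hv' : v = (i, j)
          · exact Finset.mem_union_left _ (Finset.mem_filter.mpr ⟨hvt, hv'⟩)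
          · rw [hσf_other v hv'] at hvσ
            exact Finset.mem_union_right _ (Finset.mem_filter.mpr ⟨hvt, hvσ⟩)
        calc (t.filter (fun v => σf v = (i₁, j))).card
            ≤ (t.filter (fun v => v = (i, j)) ∪ t.filter (fun v => v = (i₁, j))).card :=
              Finset.card_le_card hsubset
          _ ≤ (t.filter (fun v => v = (i, j))).card + (t.filter (fun v => v = (i₁, j))).card :=
              Finset.card_union_le _ _
          _ ≤ e := by
              rw [← aux_sum_single_apply_id t (i, j), ← aux_sum_single_apply_id t (i₁, j)]
              exact h2
      · have hfilt : t.filter (fun v => σf v = w) = t.filter (fun v => v = w) := by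
          apply Finset.filter_congr
          intro v _
          by_cases hv : v = (i, j)
          · subst hv
            rw [hσf_self]
            exact iff_of_false (fun h => hw2 h.symm) (fun h => hw1 h.symm)
          · rw [hσf_other v hv]
        rw [hfilt, ← aux_sum_single_apply_id]
        exact h1 w hw1 hw2
  by_cases h0 : e = 0
  · obtain ⟨t, htG, hle⟩ := (hKid_mem _).mp hνmem ν (hmemsupp ν)
    have hle' := Finsupp.le_def.mp hle
    refine ⟨t, htG, final t ?_ ?_⟩
    · intro w hw1 _
      have := hle' w
      rwa [hνap, if_neg hw1] at this
    · have l1 := hle' (i, j)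
      have l2 := hle' (i₁, j)
      rw [hνap, if_pos rfl] at l1
      rw [hνap, if_neg (Ne.symm hij_ne), ← he] at l2
      omega
  · by_cases h1 : e = 1
    · -- strip one of the two variables using hcol
      set ν₀ : (ρ × γ) →₀ ℕ := (ν.update (i, j) 0).update (i₁, j) 0 with hν₀
      have hν₀ap : ∀ w, ν₀ w = if w = (i₁, j) then 0 else if w = (i, j) then 0 else μ w := by
        intro w
        rw [hν₀, Finsupp.coe_update, Function.update_apply]
        by_cases hw : w = (i₁, j)
        · simp [hw]
        · rw [if_neg hw, Finsupp.coe_update, Function.update_apply, hνap]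
          by_cases hw' : w = (i, j) <;> simp [hw, hw']
      have hsplit : Finsupp.single ((i, j) : ρ × γ) 1 +
          (Finsupp.single ((i₁, j) : ρ × γ) 1 + ν₀) = ν := by
        ext w
        rw [Finsupp.add_apply, Finsupp.add_apply, Finsupp.single_apply, Finsupp.single_apply,
          hν₀ap, hνap]
        by_cases hw1 : w = (i, j)
        · subst hw1
          simp [hij_ne, Ne.symm hij_ne, h1]
        · by_cases hw2 : w = (i₁, j)
          · subst hw2
            simp [hij_ne, Ne.symm hij_ne, hw1, ← he, h1]
          · have h1' : ¬((i, j) : ρ × γ) = w := fun h => hw1 h.symm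
            have h2' : ¬((i₁, j) : ρ × γ) = w := fun h => hw2 h.symm
            simp [hw1, hw2, h1', h2']
      have hmul : (X (i, j) : MvPolynomial (ρ × γ) K) * X (i₁, j) * monomial ν₀ 1
          = monomial ν 1 := by
        rw [X, X, monomial_mul, monomial_mul, one_mul, one_mul, add_assoc, hsplit]
      have hstrip : ∃ c : ρ × γ, (c = (i, j) ∨ c = (i₁, j)) ∧
          monomial (Finsupp.single c 1 + ν₀) (1 : K) ∈ Kid := by
        rcases hcol (monomial ν₀ 1) i i₁ j hi (by rw [hmul]; exact hνmem) with hcase | hcase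
        · exact ⟨(i, j), Or.inl rfl, by rwa [X, monomial_mul, one_mul] at hcase⟩
        · exact ⟨(i₁, j), Or.inr rfl, by rwa [X, monomial_mul, one_mul] at hcase⟩
      obtain ⟨c, hc, hcmem⟩ := hstrip
      obtain ⟨t, htG, hle⟩ := (hKid_mem _).mp hcmem _ (hmemsupp _)
      have hle' := Finsupp.le_def.mp hle
      refine ⟨t, htG, final t ?_ ?_⟩
      · intro w hw1 hw2
        have hw := hle' w
        have hcw : ¬(c = w) := by
          rcases hc with rfl | rfl
          exacts [fun h => hw1 h.symm, fun h => hw2 h.symm]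
        rwa [Finsupp.add_apply, Finsupp.single_apply, hν₀ap, if_neg hcw, if_neg hw2,
          if_neg hw1, zero_add] at hw
      · have l1 := hle' (i, j)
        have l2 := hle' (i₁, j)
        have r1 : (Finsupp.single c 1 + ν₀ : (ρ × γ) →₀ ℕ) (i, j) + (Finsupp.single c 1 + ν₀ : (ρ × γ) →₀ ℕ) (i₁, j) ≤ 1 := by
          rw [Finsupp.add_apply, Finsupp.add_apply, Finsupp.single_apply, Finsupp.single_apply,
            hν₀ap, hν₀ap]
          rcases hc with rfl | rfl
          · simp [hij_ne, Ne.symm hij_ne]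
          · simp [hij_ne, Ne.symm hij_ne]
        omega
    · -- e ≥ 2
      obtain ⟨t, htG, hle⟩ := (hKid_mem _).mp hνmem ν (hmemsupp ν)
      have hle' := Finsupp.le_def.mp hle
      refine ⟨t, htG, final t ?_ ?_⟩
      · intro w hw1 _
        have := hle' w
        rwa [hνap, if_neg hw1] at this
      · have c1 : (∑ v ∈ t, Finsupp.single v 1) (i, j) ≤ 1 := by
          rw [aux_sum_single_apply_id, Finset.filter_eq']
          split <;> simp
        have c2 : (∑ v ∈ t, Finsupp.single v 1) (i₁, j) ≤ 1 := by
          rw [aux_sum_single_apply_id, Finset.filter_eq']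
          split <;> simp
        omega


end
end

section
/- Let X' be a k×n sparse generic matrix whose first column is (0,...,0,x_{k1})ᵀ, let M' be the (k−1)×(n−1) submatrix obtained by deleting the last row and first column, and let Y be the k×(n−1) matrix of the last n−1 columns. Then for I' = I_k(X'): the colon ideal I' : x_{k1} equals I_{k−1}(M'), and the sum ideal (I', x_{k1}) equals (x_{k1}) + I_k(Y). -/
/-!
STATEMENT 14: Let `X'` be a `(k+1) × (n+1)` sparse generic matrix whose first column
is `(0, …, 0, x)ᵀ` (zeros in rows `0, …, k-1` and the variable `x = x_{k,0}` in the
last row).  Let `M'` be the `k × n` submatrix obtained by deleting the last row and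
the first column, and let `Y` be the `(k+1) × n` matrix of the last `n` columns.
Then for `I' = I_{k+1}(X')`:
  `I' : x = I_k(M')`   and   `(I', x) = (x) + I_{k+1}(Y)`.
-/

open MvPolynomial

noncomputable section

variable {K : Type*} [Field K]

/-- the ideal of maximal minors of a `k × n` matrix (`k` rows). -/
def maxMinors {R : Type*} [CommRing R] {k n : ℕ} (M : Matrix (Fin k) (Fin n) R) :
    Ideal R :=
  Ideal.span {d | ∃ g : Fin k → Fin n, StrictMono g ∧ d = (M.submatrix id g).det}

/-- the sparse generic matrix with zero set `Z`, over the polynomial ring on the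
remaining (nonzero) entries. -/
def sparseGeneric (K : Type*) [Field K] (k n : ℕ) (Z : Set (Fin k × Fin n))
    [DecidablePred (· ∈ Z)] :
    Matrix (Fin k) (Fin n) (MvPolynomial {p : Fin k × Fin n // p ∉ Z} K) :=
  fun i j => if h : (i, j) ∈ Z then 0 else X ⟨(i, j), h⟩

section Aux

/-- maximal minors of a `(k+1) × n` matrix lie in the ideal of maximal minors of
the matrix of its first `k` rows (Laplace expansion along the last row). -/
lemma maxMinors_le_delete_last_row {R : Type*} [CommRing R] {k n : ℕ}
    (A : Matrix (Fin (k + 1)) (Fin n) R) :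
    maxMinors A ≤ maxMinors (A.submatrix Fin.castSucc id) := by
  rw [maxMinors, Ideal.span_le]
  rintro d ⟨g, hg, rfl⟩
  rw [SetLike.mem_coe, Matrix.det_succ_row _ (Fin.last k)]
  refine Ideal.sum_mem _ fun j _ => Ideal.mul_mem_left _ _ ?_
  have hsub : ((A.submatrix id g).submatrix (Fin.last k).succAbove j.succAbove)
      = ((A.submatrix Fin.castSucc id).submatrix id (g ∘ j.succAbove)) := by
    rw [Fin.succAbove_last]
    ext i l
    simp [Matrix.submatrix_apply]
  rw [hsub]
  exact Ideal.subset_span ⟨g ∘ j.succAbove, hg.comp (Fin.strictMono_succAbove j), rfl⟩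

variable {k n : ℕ} {Z : Set (Fin (k + 1) × Fin (n + 1))} [DecidablePred (· ∈ Z)]

/-- determinant of a maximal minor using the first column. -/
lemma det_col_zero
    (hcol : ∀ i : Fin (k + 1), i ≠ Fin.last k → (i, (0 : Fin (n + 1))) ∈ Z)
    (hx : ((Fin.last k, (0 : Fin (n + 1))) : Fin (k + 1) × Fin (n + 1)) ∉ Z)
    {g : Fin (k + 1) → Fin (n + 1)} (hg0 : g 0 = 0)
    (h : Fin k → Fin n) (hh : ∀ j : Fin k, (h j).succ = g j.succ) :
    ((sparseGeneric K (k + 1) (n + 1) Z).submatrix id g).det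
      = (-1) ^ k * (X ⟨(Fin.last k, 0), hx⟩ *
          (((sparseGeneric K (k + 1) (n + 1) Z).submatrix Fin.castSucc Fin.succ).submatrix
            id h).det) := by
  rw [Matrix.det_succ_column_zero, Finset.sum_eq_single (Fin.last k)]
  · have e1 : ((sparseGeneric K (k + 1) (n + 1) Z).submatrix id g) (Fin.last k) 0
        = X ⟨(Fin.last k, 0), hx⟩ := by
      simp only [Matrix.submatrix_apply, id, hg0, sparseGeneric]
      exact dif_neg hx
    have e2 : ((sparseGeneric K (k + 1) (n + 1) Z).submatrix id g).submatrix
        (Fin.last k).succAbove Fin.succ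
        = ((sparseGeneric K (k + 1) (n + 1) Z).submatrix Fin.castSucc Fin.succ).submatrix
            id h := by
      rw [Fin.succAbove_last]
      ext i j
      simp only [Matrix.submatrix_apply, id]
      rw [← hh j]
    rw [e1, e2, Fin.val_last, mul_assoc]
  · intro i _ hi
    have : ((sparseGeneric K (k + 1) (n + 1) Z).submatrix id g) i 0 = 0 := by
      simp only [Matrix.submatrix_apply, id, hg0, sparseGeneric]
      exact dif_pos (hcol i hi)
    rw [this, mul_zero, zero_mul]
  · intro hmem
    exact absurd (Finset.mem_univ _) hmem

/-- a maximal minor avoiding the first column is a maximal minor of `Y`. -/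
lemma det_col_pos {g : Fin (k + 1) → Fin (n + 1)} (hg : StrictMono g) (hg0 : g 0 ≠ 0) :
    ∃ h : Fin (k + 1) → Fin n, StrictMono h ∧
      ((sparseGeneric K (k + 1) (n + 1) Z).submatrix id g).det
        = (((sparseGeneric K (k + 1) (n + 1) Z).submatrix id Fin.succ).submatrix id h).det := by
  have hne : ∀ i, g i ≠ 0 := by
    intro i hzero
    apply hg0
    have h1 := hg.monotone (Fin.zero_le i)
    rw [hzero] at h1
    exact Fin.le_zero_iff.1 h1
  refine ⟨fun i => (g i).pred (hne i), Fin.strictMono_pred_comp hne hg, ?_⟩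
  congr 1
  ext i j
  simp only [Matrix.submatrix_apply, id]
  rw [Fin.succ_pred]

/-- minors of `Y` are minors of `X'`. -/
lemma maxMinorsY_le :
    maxMinors ((sparseGeneric K (k + 1) (n + 1) Z).submatrix id Fin.succ)
      ≤ maxMinors (sparseGeneric K (k + 1) (n + 1) Z) := by
  rw [maxMinors, Ideal.span_le]
  rintro d ⟨h, hh, rfl⟩
  exact Ideal.subset_span ⟨Fin.succ ∘ h, Fin.strictMono_succ.comp hh, rfl⟩

/-- `x` is a nonzerodivisor modulo the ideal of minors of `Y`. -/
lemma mul_X_mem_maxMinorsY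
    (hx : ((Fin.last k, (0 : Fin (n + 1))) : Fin (k + 1) × Fin (n + 1)) ∉ Z)
    {p : MvPolynomial {p : Fin (k + 1) × Fin (n + 1) // p ∉ Z} K}
    (hp : X ⟨(Fin.last k, 0), hx⟩ * p ∈
      maxMinors ((sparseGeneric K (k + 1) (n + 1) Z).submatrix id Fin.succ)) :
    p ∈ maxMinors ((sparseGeneric K (k + 1) (n + 1) Z).submatrix id Fin.succ) := by
  classical
  set v₀ : {p : Fin (k + 1) × Fin (n + 1) // p ∉ Z} := ⟨(Fin.last k, 0), hx⟩ with hv₀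
  set σ' := {q : {p : Fin (k + 1) × Fin (n + 1) // p ∉ Z} // q ≠ v₀} with hσ'
  set e : {p : Fin (k + 1) × Fin (n + 1) // p ∉ Z} ≃ Option σ' :=
    (Equiv.optionSubtypeNe v₀).symm with he
  set ψ : MvPolynomial {p : Fin (k + 1) × Fin (n + 1) // p ∉ Z} K
      ≃ₐ[K] Polynomial (MvPolynomial σ' K) :=
    (renameEquiv K e).trans (optionEquivLeft K σ') with hψ
  set f : MvPolynomial {p : Fin (k + 1) × Fin (n + 1) // p ∉ Z} K
      →+* Polynomial (MvPolynomial σ' K) := ψ.toAlgHom.toRingHom with hf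
  have hfx : f (X v₀) = Polynomial.X := by
    show (optionEquivLeft K σ') ((renameEquiv K e) (X v₀)) = _
    rw [renameEquiv_apply, rename_X, he]
    rw [Equiv.optionSubtypeNe_symm_self, optionEquivLeft_X_none]
  -- the matrix `N` over the smaller polynomial ring
  set N : Matrix (Fin (k + 1)) (Fin n) (MvPolynomial σ' K) := fun i j =>
    if h : (i, j.succ) ∈ Z then 0
    else X ⟨⟨(i, j.succ), h⟩,
      fun hq => Fin.succ_ne_zero j (congrArg Prod.snd (congrArg Subtype.val hq))⟩ with hN
  have hentry : ∀ (i : Fin (k + 1)) (j : Fin n),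
      f (((sparseGeneric K (k + 1) (n + 1) Z).submatrix id Fin.succ) i j)
        = Polynomial.C (N i j) := by
    intro i j
    show f (sparseGeneric K (k + 1) (n + 1) Z i j.succ) = _
    by_cases h : (i, j.succ) ∈ Z
    · rw [hN]
      simp only [sparseGeneric, dif_pos h, map_zero, Polynomial.C_0]
    · have hne : (⟨(i, j.succ), h⟩ : {p : Fin (k + 1) × Fin (n + 1) // p ∉ Z}) ≠ v₀ :=
        fun hq => Fin.succ_ne_zero j (congrArg Prod.snd (congrArg Subtype.val hq))
      simp only [sparseGeneric, dif_neg h]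
      show (optionEquivLeft K σ') ((renameEquiv K e) (X _)) = _
      rw [renameEquiv_apply, rename_X, he, Equiv.optionSubtypeNe_symm_of_ne hne,
        optionEquivLeft_X_some]
      rw [hN]
      simp only [dif_neg h]
  have hmatrix : ∀ g : Fin (k + 1) → Fin n,
      f.mapMatrix ((((sparseGeneric K (k + 1) (n + 1) Z).submatrix id Fin.succ)).submatrix id g)
        = (Polynomial.C : MvPolynomial σ' K →+* Polynomial (MvPolynomial σ' K)).mapMatrix
            (N.submatrix id g) := by
    intro g
    refine Matrix.ext fun i j => ?_
    simp only [RingHom.mapMatrix_apply, Matrix.map_apply, Matrix.submatrix_apply, id]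
    exact hentry i (g j)
  have hmap : Ideal.map f
        (maxMinors ((sparseGeneric K (k + 1) (n + 1) Z).submatrix id Fin.succ))
      = Ideal.map (Polynomial.C :
          MvPolynomial σ' K →+* Polynomial (MvPolynomial σ' K)) (maxMinors N) := by
    rw [maxMinors, maxMinors, Ideal.map_span, Ideal.map_span]
    congr 1
    ext y
    constructor
    · rintro ⟨d, ⟨g, hg, rfl⟩, rfl⟩
      exact ⟨(N.submatrix id g).det, ⟨g, hg, rfl⟩,
        by rw [RingHom.map_det, RingHom.map_det, hmatrix g]⟩
    · rintro ⟨d, ⟨g, hg, rfl⟩, rfl⟩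
      exact ⟨((((sparseGeneric K (k + 1) (n + 1) Z).submatrix id Fin.succ)).submatrix
          id g).det, ⟨g, hg, rfl⟩,
        by rw [RingHom.map_det, RingHom.map_det, hmatrix g]⟩
  -- transfer the hypothesis
  have hp' : Polynomial.X * f p ∈ Ideal.map (Polynomial.C :
      MvPolynomial σ' K →+* Polynomial (MvPolynomial σ' K)) (maxMinors N) := by
    rw [← hmap, ← hfx, ← map_mul]
    exact Ideal.mem_map_of_mem f hp
  have hcoeff : ∀ m, (f p).coeff m ∈ maxMinors N := by
    intro m
    have := Ideal.mem_map_C_iff.1 hp' (m + 1)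
    rwa [Polynomial.coeff_X_mul] at this
  have hfp : f p ∈ Ideal.map f
      (maxMinors ((sparseGeneric K (k + 1) (n + 1) Z).submatrix id Fin.succ)) := by
    rw [hmap]
    exact Ideal.mem_map_C_iff.2 hcoeff
  rcases (Ideal.mem_map_iff_of_surjective f ψ.surjective).1 hfp with ⟨q, hq, hfq⟩
  have : q = p := ψ.injective hfq
  rwa [this] at hq

/-- `x` times a maximal minor of `M'` is (up to sign) a maximal minor of `X'`. -/
lemma mul_X_gen_mem
    (hcol : ∀ i : Fin (k + 1), i ≠ Fin.last k → (i, (0 : Fin (n + 1))) ∈ Z)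
    (hx : ((Fin.last k, (0 : Fin (n + 1))) : Fin (k + 1) × Fin (n + 1)) ∉ Z)
    (h : Fin k → Fin n) (hh : StrictMono h) :
    X ⟨(Fin.last k, 0), hx⟩ *
        (((sparseGeneric K (k + 1) (n + 1) Z).submatrix Fin.castSucc Fin.succ).submatrix
          id h).det
      ∈ maxMinors (sparseGeneric K (k + 1) (n + 1) Z) := by
  set g : Fin (k + 1) → Fin (n + 1) := Fin.cons 0 (Fin.succ ∘ h) with hgdef
  have hg0 : g 0 = 0 := Fin.cons_zero _ _
  have hgs : ∀ j : Fin k, g j.succ = (h j).succ := fun j => Fin.cons_succ _ _ j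
  have hgm : StrictMono g := by
    intro a b hab
    rcases Fin.eq_zero_or_eq_succ a with rfl | ⟨a', rfl⟩
    · rcases Fin.eq_zero_or_eq_succ b with rfl | ⟨b', rfl⟩
      · exact absurd hab (lt_irrefl _)
      · rw [hg0, hgs b']
        exact Fin.succ_pos _
    · rcases Fin.eq_zero_or_eq_succ b with rfl | ⟨b', rfl⟩
      · exact absurd hab (Fin.not_lt_zero _)
      · rw [hgs, hgs]
        exact Fin.succ_lt_succ_iff.2 (hh (Fin.succ_lt_succ_iff.1 hab))
  have hdet := det_col_zero (K := K) hcol hx hg0 h (fun j => (hgs j).symm)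
  have hmem : ((sparseGeneric K (k + 1) (n + 1) Z).submatrix id g).det
      ∈ maxMinors (sparseGeneric K (k + 1) (n + 1) Z) :=
    Ideal.subset_span ⟨g, hgm, rfl⟩
  have h2 := Ideal.mul_mem_left _ ((-1) ^ k) hmem
  rw [hdet, ← mul_assoc, ← pow_add] at h2
  rwa [Even.neg_one_pow ⟨k, rfl⟩, one_mul] at h2

end Aux

theorem colon_and_sum_of_sparse_determinantal
    (k n : ℕ) (Z : Set (Fin (k + 1) × Fin (n + 1))) [DecidablePred (· ∈ Z)]
    -- the first column of `X'` vanishes above the last row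
    (hcol : ∀ i : Fin (k + 1), i ≠ Fin.last k → (i, (0 : Fin (n + 1))) ∈ Z)
    -- and has the variable `x = x_{k,0}` in the last row
    (hx : ((Fin.last k, (0 : Fin (n + 1))) : Fin (k + 1) × Fin (n + 1)) ∉ Z) :
    letI X' := sparseGeneric K (k + 1) (n + 1) Z
    letI x : MvPolynomial {p : Fin (k + 1) × Fin (n + 1) // p ∉ Z} K :=
      X ⟨(Fin.last k, 0), hx⟩
    letI M' := X'.submatrix Fin.castSucc Fin.succ
    letI Y := X'.submatrix id Fin.succ
    (maxMinors X').colon (Ideal.span {x}) = maxMinors M' ∧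
    maxMinors X' ⊔ Ideal.span {x} = Ideal.span {x} ⊔ maxMinors Y := by
  show (maxMinors (sparseGeneric K (k + 1) (n + 1) Z)).colon
        (Ideal.span {(X ⟨(Fin.last k, 0), hx⟩ : MvPolynomial {p : Fin (k + 1) × Fin (n + 1) // p ∉ Z} K)})
      = maxMinors ((sparseGeneric K (k + 1) (n + 1) Z).submatrix Fin.castSucc Fin.succ) ∧
      maxMinors (sparseGeneric K (k + 1) (n + 1) Z) ⊔ Ideal.span {X ⟨(Fin.last k, 0), hx⟩}
      = Ideal.span {X ⟨(Fin.last k, 0), hx⟩}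
          ⊔ maxMinors ((sparseGeneric K (k + 1) (n + 1) Z).submatrix id Fin.succ)
  set x : MvPolynomial {p : Fin (k + 1) × Fin (n + 1) // p ∉ Z} K :=
    X ⟨(Fin.last k, 0), hx⟩ with hxdef
  have hxmem : x ∈ Ideal.span {x} := Ideal.mem_span_singleton_self x
  -- key decomposition of the ideal of minors of `X'`
  have keyD : maxMinors (sparseGeneric K (k + 1) (n + 1) Z)
      ≤ Ideal.span {x} *
          maxMinors ((sparseGeneric K (k + 1) (n + 1) Z).submatrix Fin.castSucc Fin.succ)
        ⊔ maxMinors ((sparseGeneric K (k + 1) (n + 1) Z).submatrix id Fin.succ) := by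
    rw [maxMinors, Ideal.span_le]
    rintro d ⟨g, hg, rfl⟩
    rw [SetLike.mem_coe]
    by_cases hg0 : g 0 = 0
    · have hne : ∀ j : Fin k, g j.succ ≠ 0 := by
        intro j
        have hlt : g 0 < g j.succ := hg (Fin.succ_pos j)
        rw [hg0] at hlt
        exact Fin.pos_iff_ne_zero.1 hlt
      have hmono : StrictMono (fun j : Fin k => (g j.succ).pred (hne j)) :=
        Fin.strictMono_pred_comp hne (hg.comp Fin.strictMono_succ)
      have hdet := det_col_zero (K := K) hcol hx hg0
        (fun j => (g j.succ).pred (hne j)) (fun j => Fin.succ_pred _ _)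
      rw [hdet]
      refine Submodule.mem_sup_left ?_
      exact Ideal.mul_mem_left _ _
        (Ideal.mul_mem_mul hxmem (Ideal.subset_span ⟨_, hmono, rfl⟩))
    · rcases det_col_pos (K := K) (Z := Z) hg hg0 with ⟨h, hmono, hdet⟩
      rw [hdet]
      exact Submodule.mem_sup_right (Ideal.subset_span ⟨h, hmono, rfl⟩)
  have hLleJ : maxMinors ((sparseGeneric K (k + 1) (n + 1) Z).submatrix id Fin.succ)
      ≤ maxMinors ((sparseGeneric K (k + 1) (n + 1) Z).submatrix Fin.castSucc Fin.succ) :=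
    maxMinors_le_delete_last_row _
  constructor
  · apply le_antisymm
    · intro q hq
      rw [Ideal.mem_colon_span_singleton] at hq
      have hq2 := keyD hq
      rcases Submodule.mem_sup.1 hq2 with ⟨a, ha, b, hb, hab⟩
      rcases Ideal.mem_span_singleton_mul.1 ha with ⟨z, hz, rfl⟩
      have hxb : x * (q - z) ∈
          maxMinors ((sparseGeneric K (k + 1) (n + 1) Z).submatrix id Fin.succ) := by
        have heq : x * (q - z) = b := by linear_combination -hab
        rwa [heq]
      have h1 : q - z ∈
          maxMinors ((sparseGeneric K (k + 1) (n + 1) Z).submatrix Fin.castSucc Fin.succ) :=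
        hLleJ (mul_X_mem_maxMinorsY hx hxb)
      have h2 := add_mem h1 hz
      simpa using h2
    · rw [maxMinors, Ideal.span_le]
      rintro d ⟨h, hmono, rfl⟩
      rw [SetLike.mem_coe, Ideal.mem_colon_span_singleton, mul_comm]
      exact mul_X_gen_mem hcol hx h hmono
  · apply le_antisymm
    · refine sup_le (le_trans keyD (sup_le ?_ le_sup_right)) le_sup_left
      exact le_trans Ideal.mul_le_left le_sup_left
    · exact sup_le le_sup_right (le_trans maxMinorsY_le le_sup_left)

end
end
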